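/- arXiv:2310.13822 — 3 statements merged into one kernel-verified Lean document; each statement's English description precedes it below -/
import Mathlib

section
/- Mutual information is bounded by a weighted quadratic integral: I(Ŷ,S) = ∫_0^1 [P₀·p₀(z)·log(p₀(z)/p(z)) + P₁·p₁(z)·log(p₁(z)/p(z))] dz ≤ ∫_0^1 P₀·P₁·(p₀(z) − p₁(z))²/p(z) dz. -/
open intervalIntegral

/-- Mutual information is bounded by a weighted quadratic integral:
`I(Ŷ,S) = ∫_0^1 [P₀·p₀·log(p₀/p) + P₁·p₁·log(p₁/p)] ≤ ∫_0^1 P₀·P₁·(p₀ − p₁)²/p`. -/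
theorem mutual_information_le_quadratic (p₀ p₁ : ℝ → ℝ) (P₀ P₁ : ℝ)
    (hP₀ : 0 < P₀) (hP₁ : 0 < P₁) (hP : P₀ + P₁ = 1)
    (h₀pos : ∀ z ∈ Set.Icc (0 : ℝ) 1, 0 < p₀ z)
    (h₁pos : ∀ z ∈ Set.Icc (0 : ℝ) 1, 0 < p₁ z)
    (h₀int : IntervalIntegrable p₀ MeasureTheory.volume 0 1)
    (h₁int : IntervalIntegrable p₁ MeasureTheory.volume 0 1)
    (h₀one : ∫ z in (0 : ℝ)..1, p₀ z = 1)
    (h₁one : ∫ z in (0 : ℝ)..1, p₁ z = 1)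
    (hint₀ : IntervalIntegrable
      (fun z => P₀ * p₀ z * Real.log (p₀ z / (P₀ * p₀ z + P₁ * p₁ z)))
      MeasureTheory.volume 0 1)
    (hint₁ : IntervalIntegrable
      (fun z => P₁ * p₁ z * Real.log (p₁ z / (P₀ * p₀ z + P₁ * p₁ z)))
      MeasureTheory.volume 0 1)
    (hintQ : IntervalIntegrable
      (fun z => P₀ * P₁ * (p₀ z - p₁ z) ^ 2 / (P₀ * p₀ z + P₁ * p₁ z))
      MeasureTheory.volume 0 1) :
    ∫ z in (0 : ℝ)..1,
        (P₀ * p₀ z * Real.log (p₀ z / (P₀ * p₀ z + P₁ * p₁ z)) +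
          P₁ * p₁ z * Real.log (p₁ z / (P₀ * p₀ z + P₁ * p₁ z))) ≤
      ∫ z in (0 : ℝ)..1, P₀ * P₁ * (p₀ z - p₁ z) ^ 2 / (P₀ * p₀ z + P₁ * p₁ z) := by
  have key : ∀ z ∈ Set.Icc (0:ℝ) 1,
      P₀ * p₀ z * Real.log (p₀ z / (P₀ * p₀ z + P₁ * p₁ z)) +
        P₁ * p₁ z * Real.log (p₁ z / (P₀ * p₀ z + P₁ * p₁ z)) ≤
      P₀ * P₁ * (p₀ z - p₁ z) ^ 2 / (P₀ * p₀ z + P₁ * p₁ z) := by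
    intro z hz
    have ha := h₀pos z hz
    have hb := h₁pos z hz
    set a := p₀ z with hadef
    set b := p₁ z with hbdef
    have hp : 0 < P₀ * a + P₁ * b := by positivity
    have h0 := Real.log_le_sub_one_of_pos (div_pos ha hp)
    have h1 := Real.log_le_sub_one_of_pos (div_pos hb hp)
    have step1 : P₀ * a * Real.log (a / (P₀ * a + P₁ * b)) +
        P₁ * b * Real.log (b / (P₀ * a + P₁ * b)) ≤
        P₀ * a * (a / (P₀ * a + P₁ * b) - 1) + P₁ * b * (b / (P₀ * a + P₁ * b) - 1) := by
      gcongr <;> positivity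
    refine step1.trans (le_of_eq ?_)
    have hP1 : P₁ = 1 - P₀ := by linarith
    field_simp
    rw [hP1]
    ring
  exact intervalIntegral.integral_mono_on zero_le_one (hint₀.add hint₁) hintQ key
end

section
/- Mutual information is bounded by total variation (Theorem 1, mutual-information part): if p(z) = P₀·p₀(z) + P₁·p₁(z) ≥ P₀·P₁ for every z ∈ [0,1] and |p₀(z) − p₁(z)| ≤ 1 for every z ∈ [0,1], then I(Ŷ,S) = ∫_0^1 [P₀·p₀(z)·log(p₀(z)/p(z)) + P₁·p₁(z)·log(p₁(z)/p(z))] dz ≤ ∫_0^1 |p₀(z) − p₁(z)| dz = TV(Ŷ,S). -/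
open intervalIntegral

/-- Mutual information is bounded by total variation (Theorem 1, mutual-information part). -/
theorem mutual_information_le_tv (p₀ p₁ : ℝ → ℝ) (P₀ P₁ : ℝ)
    (hP₀ : 0 < P₀) (hP₁ : 0 < P₁) (hP : P₀ + P₁ = 1)
    (h₀pos : ∀ z ∈ Set.Icc (0 : ℝ) 1, 0 < p₀ z)
    (h₁pos : ∀ z ∈ Set.Icc (0 : ℝ) 1, 0 < p₁ z)
    (h₀int : IntervalIntegrable p₀ MeasureTheory.volume 0 1)
    (h₁int : IntervalIntegrable p₁ MeasureTheory.volume 0 1)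
    (h₀one : ∫ z in (0 : ℝ)..1, p₀ z = 1)
    (h₁one : ∫ z in (0 : ℝ)..1, p₁ z = 1)
    (hint₀ : IntervalIntegrable
      (fun z => P₀ * p₀ z * Real.log (p₀ z / (P₀ * p₀ z + P₁ * p₁ z)))
      MeasureTheory.volume 0 1)
    (hint₁ : IntervalIntegrable
      (fun z => P₁ * p₁ z * Real.log (p₁ z / (P₀ * p₀ z + P₁ * p₁ z)))
      MeasureTheory.volume 0 1)
    (hintQ : IntervalIntegrable
      (fun z => P₀ * P₁ * (p₀ z - p₁ z) ^ 2 / (P₀ * p₀ z + P₁ * p₁ z))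
      MeasureTheory.volume 0 1)
    (hintS : IntervalIntegrable (fun z => (p₀ z - p₁ z) ^ 2)
      MeasureTheory.volume 0 1)
    (hintA : IntervalIntegrable (fun z => |p₀ z - p₁ z|)
      MeasureTheory.volume 0 1)
    (hmix : ∀ z ∈ Set.Icc (0 : ℝ) 1, P₀ * P₁ ≤ P₀ * p₀ z + P₁ * p₁ z)
    (hdiff : ∀ z ∈ Set.Icc (0 : ℝ) 1, |p₀ z - p₁ z| ≤ 1) :
    ∫ z in (0 : ℝ)..1,
        (P₀ * p₀ z * Real.log (p₀ z / (P₀ * p₀ z + P₁ * p₁ z)) +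
          P₁ * p₁ z * Real.log (p₁ z / (P₀ * p₀ z + P₁ * p₁ z))) ≤
      ∫ z in (0 : ℝ)..1, |p₀ z - p₁ z| := by
  apply intervalIntegral.integral_mono_on (by norm_num) (hint₀.add hint₁) hintA
  intro z hz
  have ha := h₀pos z hz
  have hb := h₁pos z hz
  set a := p₀ z with hA
  set b := p₁ z with hB
  have hp : (0:ℝ) < P₀ * a + P₁ * b :=
    lt_of_lt_of_le (mul_pos hP₀ hP₁) (hmix z hz)
  have h1 : Real.log (a / (P₀ * a + P₁ * b)) ≤ a / (P₀ * a + P₁ * b) - 1 :=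
    Real.log_le_sub_one_of_pos (div_pos ha hp)
  have h2 : Real.log (b / (P₀ * a + P₁ * b)) ≤ b / (P₀ * a + P₁ * b) - 1 :=
    Real.log_le_sub_one_of_pos (div_pos hb hp)
  have hP₁' : P₁ = 1 - P₀ := by linarith
  have key : P₀ * a * Real.log (a / (P₀ * a + P₁ * b)) +
      P₁ * b * Real.log (b / (P₀ * a + P₁ * b)) ≤ P₀ * P₁ * (a - b) ^ 2 / (P₀ * a + P₁ * b) := by
    have step : P₀ * a * Real.log (a / (P₀ * a + P₁ * b)) +
        P₁ * b * Real.log (b / (P₀ * a + P₁ * b)) ≤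
        P₀ * a * (a / (P₀ * a + P₁ * b) - 1) + P₁ * b * (b / (P₀ * a + P₁ * b) - 1) :=
      add_le_add (mul_le_mul_of_nonneg_left h1 (by positivity))
        (mul_le_mul_of_nonneg_left h2 (by positivity))
    have eq : P₀ * a * (a / (P₀ * a + P₁ * b) - 1) + P₁ * b * (b / (P₀ * a + P₁ * b) - 1)
        = P₀ * P₁ * (a - b) ^ 2 / (P₀ * a + P₁ * b) := by
      have hpne : P₀ * a + P₁ * b ≠ 0 := hp.ne'
      field_simp
      linear_combination (-(P₀ * a ^ 2 + P₁ * b ^ 2)) * hP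
    linarith
  have key2 : P₀ * P₁ * (a - b) ^ 2 / (P₀ * a + P₁ * b) ≤ (a - b) ^ 2 := by
    rw [div_le_iff₀ hp]
    nlinarith [hmix z hz, sq_nonneg (a - b)]
  have key3 : (a - b) ^ 2 ≤ |a - b| := by
    nlinarith [hdiff z hz, abs_nonneg (a - b), sq_abs (a - b)]
  linarith
end

section
/- Mutual information is bounded by the square root of total variation (Theorem A.1): if ∫_0^1 (P₀·P₁/p(z))² dz ≤ 1 and |p₀(z) − p₁(z)| ≤ 1 for every z ∈ [0,1], then I(Ŷ,S) = ∫_0^1 [P₀·p₀(z)·log(p₀(z)/p(z)) + P₁·p₁(z)·log(p₁(z)/p(z))] dz ≤ √(∫_0^1 |p₀(z) − p₁(z)| dz) = √(TV(Ŷ,S)). -/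
open intervalIntegral

/-- Mutual information is bounded by the square root of total variation (Theorem A.1). -/
theorem mutual_information_le_sqrt_tv (p₀ p₁ : ℝ → ℝ) (P₀ P₁ : ℝ)
    (hP₀ : 0 < P₀) (hP₁ : 0 < P₁) (hP : P₀ + P₁ = 1)
    (h₀pos : ∀ z ∈ Set.Icc (0 : ℝ) 1, 0 < p₀ z)
    (h₁pos : ∀ z ∈ Set.Icc (0 : ℝ) 1, 0 < p₁ z)
    (h₀int : IntervalIntegrable p₀ MeasureTheory.volume 0 1)
    (h₁int : IntervalIntegrable p₁ MeasureTheory.volume 0 1)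
    (h₀one : ∫ z in (0 : ℝ)..1, p₀ z = 1)
    (h₁one : ∫ z in (0 : ℝ)..1, p₁ z = 1)
    (hint₀ : IntervalIntegrable
      (fun z => P₀ * p₀ z * Real.log (p₀ z / (P₀ * p₀ z + P₁ * p₁ z)))
      MeasureTheory.volume 0 1)
    (hint₁ : IntervalIntegrable
      (fun z => P₁ * p₁ z * Real.log (p₁ z / (P₀ * p₀ z + P₁ * p₁ z)))
      MeasureTheory.volume 0 1)
    (hintQ : IntervalIntegrable
      (fun z => P₀ * P₁ * (p₀ z - p₁ z) ^ 2 / (P₀ * p₀ z + P₁ * p₁ z))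
      MeasureTheory.volume 0 1)
    (hintW : IntervalIntegrable
      (fun z => (P₀ * P₁ / (P₀ * p₀ z + P₁ * p₁ z)) ^ 2)
      MeasureTheory.volume 0 1)
    (hintF : IntervalIntegrable (fun z => (p₀ z - p₁ z) ^ 4)
      MeasureTheory.volume 0 1)
    (hintA : IntervalIntegrable (fun z => |p₀ z - p₁ z|)
      MeasureTheory.volume 0 1)
    (hw : ∫ z in (0 : ℝ)..1, (P₀ * P₁ / (P₀ * p₀ z + P₁ * p₁ z)) ^ 2 ≤ 1)
    (hdiff : ∀ z ∈ Set.Icc (0 : ℝ) 1, |p₀ z - p₁ z| ≤ 1) :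
    ∫ z in (0 : ℝ)..1,
        (P₀ * p₀ z * Real.log (p₀ z / (P₀ * p₀ z + P₁ * p₁ z)) +
          P₁ * p₁ z * Real.log (p₁ z / (P₀ * p₀ z + P₁ * p₁ z))) ≤
      Real.sqrt (∫ z in (0 : ℝ)..1, |p₀ z - p₁ z|) := by
  set q : ℝ → ℝ := fun z => P₀ * p₀ z + P₁ * p₁ z with hqdef
  have hqpos : ∀ z ∈ Set.Icc (0:ℝ) 1, 0 < q z := fun z hz =>
    add_pos (mul_pos hP₀ (h₀pos z hz)) (mul_pos hP₁ (h₁pos z hz))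
  set T : ℝ := ∫ z in (0:ℝ)..1, |p₀ z - p₁ z| with hTdef
  have hT0 : 0 ≤ T := by
    apply intervalIntegral.integral_nonneg (by norm_num)
    intro z hz; exact abs_nonneg _
  -- Step A : I ≤ ∫ P₀P₁ (p₀-p₁)²/q
  have stepA : (∫ z in (0:ℝ)..1,
        (P₀ * p₀ z * Real.log (p₀ z / (P₀ * p₀ z + P₁ * p₁ z)) +
          P₁ * p₁ z * Real.log (p₁ z / (P₀ * p₀ z + P₁ * p₁ z)))) ≤
      ∫ z in (0:ℝ)..1, P₀ * P₁ * (p₀ z - p₁ z) ^ 2 / (P₀ * p₀ z + P₁ * p₁ z) := by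
    apply intervalIntegral.integral_mono_on (by norm_num) (hint₀.add hint₁) hintQ
    intro z hz
    have hp0 := h₀pos z hz
    have hp1 := h₁pos z hz
    have hqz : 0 < P₀ * p₀ z + P₁ * p₁ z := hqpos z hz
    have l0 : Real.log (p₀ z / (P₀ * p₀ z + P₁ * p₁ z)) ≤
        p₀ z / (P₀ * p₀ z + P₁ * p₁ z) - 1 :=
      Real.log_le_sub_one_of_pos (div_pos hp0 hqz)
    have l1 : Real.log (p₁ z / (P₀ * p₀ z + P₁ * p₁ z)) ≤
        p₁ z / (P₀ * p₀ z + P₁ * p₁ z) - 1 :=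
      Real.log_le_sub_one_of_pos (div_pos hp1 hqz)
    have e : P₀ * p₀ z * (p₀ z / (P₀ * p₀ z + P₁ * p₁ z) - 1) +
        P₁ * p₁ z * (p₁ z / (P₀ * p₀ z + P₁ * p₁ z) - 1)
        = P₀ * P₁ * (p₀ z - p₁ z) ^ 2 / (P₀ * p₀ z + P₁ * p₁ z) := by
      have hne : P₀ * p₀ z + P₁ * p₁ z ≠ 0 := ne_of_gt hqz
      have hP1' : P₁ = 1 - P₀ := by linarith
      rw [hP1'] at hne ⊢
      field_simp [hne]
      ring
    calc P₀ * p₀ z * Real.log (p₀ z / (P₀ * p₀ z + P₁ * p₁ z)) +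
          P₁ * p₁ z * Real.log (p₁ z / (P₀ * p₀ z + P₁ * p₁ z))
        ≤ P₀ * p₀ z * (p₀ z / (P₀ * p₀ z + P₁ * p₁ z) - 1) +
          P₁ * p₁ z * (p₁ z / (P₀ * p₀ z + P₁ * p₁ z) - 1) := by
          gcongr <;> positivity
      _ = P₀ * P₁ * (p₀ z - p₁ z) ^ 2 / (P₀ * p₀ z + P₁ * p₁ z) := e
  -- Step C : ∫ (p₀-p₁)^4 ≤ T
  have stepC : (∫ z in (0:ℝ)..1, (p₀ z - p₁ z) ^ 4) ≤ T := by
    apply intervalIntegral.integral_mono_on (by norm_num) hintF hintA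
    intro z hz
    have h1 := hdiff z hz
    have h2 : (p₀ z - p₁ z) ^ 4 = |p₀ z - p₁ z| ^ 4 := by
      rw [← abs_pow, abs_of_nonneg (by positivity)]
    rw [h2]
    calc |p₀ z - p₁ z| ^ 4 ≤ |p₀ z - p₁ z| ^ 1 :=
          pow_le_pow_of_le_one (abs_nonneg _) h1 (by norm_num)
      _ = |p₀ z - p₁ z| := pow_one _
  -- key : for all t > 0, ∫ Q ≤ t/2 + T/(2t)
  have key : ∀ t : ℝ, 0 < t →
      (∫ z in (0:ℝ)..1, P₀ * P₁ * (p₀ z - p₁ z) ^ 2 / (P₀ * p₀ z + P₁ * p₁ z))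
        ≤ t / 2 + T / (2 * t) := by
    intro t ht
    have ht2 : (0:ℝ) < 2 * t := by linarith
    have hmono : (∫ z in (0:ℝ)..1, P₀ * P₁ * (p₀ z - p₁ z) ^ 2 / (P₀ * p₀ z + P₁ * p₁ z))
        ≤ ∫ z in (0:ℝ)..1,
            (t / 2 * (P₀ * P₁ / (P₀ * p₀ z + P₁ * p₁ z)) ^ 2 +
             1 / (2 * t) * (p₀ z - p₁ z) ^ 4) := by
      apply intervalIntegral.integral_mono_on (by norm_num) hintQ
        ((hintW.const_mul _).add (hintF.const_mul _))
      intro z hz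
      have hqz : 0 < P₀ * p₀ z + P₁ * p₁ z := hqpos z hz
      set a : ℝ := P₀ * P₁ / (P₀ * p₀ z + P₁ * p₁ z) with hadef
      set b : ℝ := (p₀ z - p₁ z) ^ 2 with hbdef
      have hab : P₀ * P₁ * (p₀ z - p₁ z) ^ 2 / (P₀ * p₀ z + P₁ * p₁ z) = a * b := by
        rw [hadef, hbdef]; ring
      have hb4 : (p₀ z - p₁ z) ^ 4 = b ^ 2 := by rw [hbdef]; ring
      rw [hab, hb4]
      have hsq := sq_nonneg (t * a - b)
      have h1 : a * b ≤ (t ^ 2 * a ^ 2 + b ^ 2) / (2 * t) := by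
        rw [le_div_iff₀ ht2]; nlinarith
      calc a * b ≤ (t ^ 2 * a ^ 2 + b ^ 2) / (2 * t) := h1
        _ = t / 2 * a ^ 2 + 1 / (2 * t) * b ^ 2 := by field_simp
    have hsplit : (∫ z in (0:ℝ)..1,
            (t / 2 * (P₀ * P₁ / (P₀ * p₀ z + P₁ * p₁ z)) ^ 2 +
             1 / (2 * t) * (p₀ z - p₁ z) ^ 4))
        = t / 2 * (∫ z in (0:ℝ)..1, (P₀ * P₁ / (P₀ * p₀ z + P₁ * p₁ z)) ^ 2)
          + 1 / (2 * t) * (∫ z in (0:ℝ)..1, (p₀ z - p₁ z) ^ 4) := by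
      rw [intervalIntegral.integral_add (hintW.const_mul _) (hintF.const_mul _),
        intervalIntegral.integral_const_mul, intervalIntegral.integral_const_mul]
    have hlast : t / 2 * (∫ z in (0:ℝ)..1, (P₀ * P₁ / (P₀ * p₀ z + P₁ * p₁ z)) ^ 2)
          + 1 / (2 * t) * (∫ z in (0:ℝ)..1, (p₀ z - p₁ z) ^ 4)
        ≤ t / 2 + T / (2 * t) := by
      have h1 : t / 2 * (∫ z in (0:ℝ)..1, (P₀ * P₁ / (P₀ * p₀ z + P₁ * p₁ z)) ^ 2)
          ≤ t / 2 * 1 := by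
        apply mul_le_mul_of_nonneg_left hw (by linarith)
      have h2 : 1 / (2 * t) * (∫ z in (0:ℝ)..1, (p₀ z - p₁ z) ^ 4)
          ≤ 1 / (2 * t) * T := by
        apply mul_le_mul_of_nonneg_left stepC (by positivity)
      have : 1 / (2 * t) * T = T / (2 * t) := by ring
      linarith
    linarith [hmono, hsplit ▸ hmono, hlast, hsplit.symm ▸ hlast]
  -- combine
  rcases eq_or_lt_of_le hT0 with hTeq | hTpos
  · have hsqrt : Real.sqrt T = 0 := by rw [← hTeq, Real.sqrt_zero]
    rw [hsqrt]
    apply le_of_forall_pos_le_add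
    intro ε hε
    have h := key (2 * ε) (by linarith)
    rw [← hTeq] at h
    calc (∫ z in (0:ℝ)..1,
        (P₀ * p₀ z * Real.log (p₀ z / (P₀ * p₀ z + P₁ * p₁ z)) +
          P₁ * p₁ z * Real.log (p₁ z / (P₀ * p₀ z + P₁ * p₁ z))))
        ≤ 2 * ε / 2 + 0 / (2 * (2 * ε)) := le_trans stepA h
      _ ≤ 0 + ε := by
          rw [zero_div]; linarith
  · have hst : 0 < Real.sqrt T := Real.sqrt_pos.mpr hTpos
    have h := key (Real.sqrt T) hst
    have hmul : Real.sqrt T * Real.sqrt T = T := Real.mul_self_sqrt hT0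
    have heq : Real.sqrt T / 2 + T / (2 * Real.sqrt T) = Real.sqrt T := by
      field_simp
      nlinarith [hmul]
    rw [heq] at h
    exact le_trans stepA h
end
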